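/- arXiv:1901.04755 — 2 statements merged into one kernel-verified Lean document; each statement's English description precedes it below -/
import Mathlib

section
/- Let μ_ε be a sequence of finite E-valued Radon measures on Ω with sup_ε |μ_ε|(Ω) < ∞ which two-scale converges to κ ⊗ θ_x (with κ a positive measure on Ω̄ and θ a weak-* κ-measurable map into M(Z;E)). Then the total variation of the limit satisfies (κ ⊗ |θ_x|)(Ω̄ × Z) ≤ liminf_{ε↓0} |μ_ε|(Ω). -/
/-!
Approximate the polar `P` in `L¹(Λ)` by a simple function: the norms of the integrals of `P`
over its level sets `A_c` nearly add up to `∫ ‖P‖ = Λ(univ)`. Regularity of `Λ` and Urysohn's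
lemma replace the indicators of the `A_c` by continuous `ψ_c ∈ [0, 1]` with disjoint supports,
so `∑ ψ_c ≤ 1` and `Λ(univ) ≤ ∑ ‖∫ ψ_c • P dΛ‖ + δ`. Each of these terms is the limit of
`‖∫ ψ_c(x, x/ε) • f_ε dσ_ε‖`, and since `‖f_ε‖ = 1` these sum to at most `σ_ε(univ)`.
-/

open MeasureTheory Filter Topology Set Function

section Integral

variable {X E : Type*} [MeasurableSpace X] {μ : Measure X}
  [NormedAddCommGroup E] [NormedSpace ℝ E]

theorem integral_norm_le_norm_integral_add_two_mul [CompleteSpace E] [IsFiniteMeasure μ]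
    {P : X → E} (hP : Integrable P μ) (c : E) :
    ∫ x, ‖P x‖ ∂μ ≤ ‖∫ x, P x ∂μ‖ + 2 * ∫ x, ‖P x - c‖ ∂μ := by
  have hPc : Integrable (fun x => P x - c) μ := hP.sub (integrable_const c)
  have hc : ‖∫ _, c ∂μ‖ ≤ ‖∫ x, P x ∂μ‖ + ∫ x, ‖P x - c‖ ∂μ := by
    calc ‖∫ _, c ∂μ‖ = ‖∫ x, P x ∂μ - ∫ x, (P x - c) ∂μ‖ := by
          rw [integral_sub hP (integrable_const c), sub_sub_cancel]
      _ ≤ ‖∫ x, P x ∂μ‖ + ‖∫ x, (P x - c) ∂μ‖ := norm_sub_le _ _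
      _ ≤ ‖∫ x, P x ∂μ‖ + ∫ x, ‖P x - c‖ ∂μ := by gcongr; exact norm_integral_le_integral_norm _
  calc ∫ x, ‖P x‖ ∂μ ≤ ∫ x, (‖c‖ + ‖P x - c‖) ∂μ :=
        integral_mono hP.norm ((integrable_const _).add hPc.norm)
          fun x => by simpa using norm_le_insert' (P x) c
    _ = ‖∫ _, c ∂μ‖ + ∫ x, ‖P x - c‖ ∂μ := by
        rw [integral_add (integrable_const _) hPc.norm, integral_const, integral_const,
          norm_smul, smul_eq_mul, Real.norm_of_nonneg measureReal_nonneg]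
    _ ≤ ‖∫ x, P x ∂μ‖ + 2 * ∫ x, ‖P x - c‖ ∂μ := by linarith

theorem MeasureTheory.SimpleFunc.sum_setIntegral_preimage_singleton {F : Type*}
    (g : SimpleFunc X F) {h : X → E} (hh : Integrable h μ) :
    ∑ c ∈ g.range, ∫ x in g ⁻¹' {c}, h x ∂μ = ∫ x, h x ∂μ := by
  classical
  rw [← integral_biUnion_finset _ (fun c _ => g.measurableSet_fiber c)
    (fun c _ c' _ hcc' => (disjoint_singleton.2 hcc').preimage g) (fun _ _ => hh.integrableOn)]
  have hcover : ⋃ c ∈ g.range, g ⁻¹' {c} = univ := by ext x; simp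
  rw [hcover, setIntegral_univ]

theorem exists_integral_norm_le_sum_norm_setIntegral [CompleteSpace E] [IsFiniteMeasure μ]
    {P : X → E} (hP : Integrable P μ) {δ : ℝ} (hδ : 0 < δ) :
    ∃ (s : Finset E) (A : E → Set X), (∀ c, MeasurableSet (A c)) ∧ Pairwise (Disjoint on A) ∧
      ∫ x, ‖P x‖ ∂μ ≤ ∑ c ∈ s, ‖∫ x in A c, P x ∂μ‖ + δ := by
  obtain ⟨g, hPg, hg⟩ := (memLp_one_iff_integrable.2 hP).exists_simpleFunc_eLpNorm_sub_lt
    ENNReal.one_ne_top (ENNReal.ofReal_pos.2 (half_pos hδ)).ne'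
  have hPg_int : Integrable (fun x => P x - g x) μ := hP.sub (memLp_one_iff_integrable.1 hg)
  have hPg_small : ∫ x, ‖P x - g x‖ ∂μ < δ / 2 := by
    rw [integral_norm_eq_lintegral_enorm hPg_int.aestronglyMeasurable,
      ← eLpNorm_one_eq_lintegral_enorm]
    exact ENNReal.toReal_lt_of_lt_ofReal hPg
  refine ⟨g.range, fun c => g ⁻¹' {c}, g.measurableSet_fiber,
    fun c c' hcc' => (disjoint_singleton.2 hcc').preimage g, ?_⟩
  have hfiber : ∀ c, ∫ x in g ⁻¹' {c}, ‖P x‖ ∂μ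
      ≤ ‖∫ x in g ⁻¹' {c}, P x ∂μ‖ + 2 * ∫ x in g ⁻¹' {c}, ‖P x - g x‖ ∂μ := by
    intro c
    have hgc : ∫ x in g ⁻¹' {c}, ‖P x - g x‖ ∂μ = ∫ x in g ⁻¹' {c}, ‖P x - c‖ ∂μ :=
      setIntegral_congr_fun (g.measurableSet_fiber c) fun x (hx : g x = c) => by simp only [hx]
    rw [hgc]
    exact integral_norm_le_norm_integral_add_two_mul hP.integrableOn c
  calc ∫ x, ‖P x‖ ∂μ
      = ∑ c ∈ g.range, ∫ x in g ⁻¹' {c}, ‖P x‖ ∂μ :=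
        (g.sum_setIntegral_preimage_singleton hP.norm).symm
    _ ≤ ∑ c ∈ g.range, (‖∫ x in g ⁻¹' {c}, P x ∂μ‖ + 2 * ∫ x in g ⁻¹' {c}, ‖P x - g x‖ ∂μ) :=
        Finset.sum_le_sum fun c _ => hfiber c
    _ = ∑ c ∈ g.range, ‖∫ x in g ⁻¹' {c}, P x ∂μ‖ + 2 * ∫ x, ‖P x - g x‖ ∂μ := by
        rw [Finset.sum_add_distrib, ← Finset.mul_sum,
          g.sum_setIntegral_preimage_singleton hPg_int.norm]
    _ ≤ _ := by linarith

theorem norm_integral_smul_sub_setIntegral_le [IsFiniteMeasure μ] {P : X → E}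
    (hPm : AEStronglyMeasurable P μ) (hP : ∀ᵐ x ∂μ, ‖P x‖ ≤ 1) {ψ : X → ℝ}
    (hψm : Measurable ψ) (hψ : ∀ x, ψ x ∈ Icc 0 1) {A : Set X} (hA : MeasurableSet A) :
    ‖∫ x, ψ x • P x ∂μ - ∫ x in A, P x ∂μ‖ ≤ μ.real {x | ψ x ≠ A.indicator 1 x} := by
  have hPint : Integrable P μ := (integrable_const 1).mono' hPm hP
  have hψA : ∀ x, |ψ x - A.indicator 1 x| ≤ 1 := by
    intro x
    have := hψ x
    by_cases hx : x ∈ A <;> simp [hx, abs_le] <;> constructor <;> linarith [this.1, this.2]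
  have hψPint : Integrable (fun x => ψ x • P x) μ :=
    hPint.bdd_smul 1 hψm.aestronglyMeasurable (Eventually.of_forall fun x => by
      rw [Real.norm_of_nonneg (hψ x).1]; exact (hψ x).2)
  have hdiff : ∀ x, ψ x • P x - A.indicator P x = (ψ x - A.indicator 1 x) • P x := by
    intro x
    by_cases hx : x ∈ A <;> simp [hx, sub_smul]
  set B := {x | ψ x ≠ A.indicator 1 x}
  have hB : MeasurableSet B := (measurableSet_eq_fun hψm (measurable_const.indicator hA)).compl
  have hle : ∀ᵐ x ∂μ, ‖ψ x • P x - A.indicator P x‖ ≤ B.indicator 1 x := by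
    filter_upwards [hP] with x hPx
    rw [hdiff, norm_smul, Real.norm_eq_abs]
    by_cases hx : x ∈ B
    · rw [indicator_of_mem hx, Pi.one_apply]
      exact mul_le_one₀ (hψA x) (norm_nonneg _) hPx
    · rw [show ψ x = A.indicator 1 x from not_not.1 hx, sub_self, abs_zero, zero_mul]
      exact indicator_nonneg (fun _ _ => zero_le_one) x
  rw [← integral_indicator hA, ← integral_sub hψPint (hPint.indicator hA),
    ← integral_indicator_one hB]
  exact (norm_integral_le_integral_norm _).trans <|
    integral_mono_ae (hψPint.sub (hPint.indicator hA)).norm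
      ((integrable_const 1).indicator hB) hle

end Integral

theorem exists_isOpen_superset_pairwise_disjoint {X ι : Type*} [TopologicalSpace X]
    [NormalSpace X] (s : Finset ι) {F : ι → Set X} (hF : ∀ i, IsClosed (F i))
    (hdisj : Pairwise (Disjoint on F)) :
    ∃ U : ι → Set X, (∀ i, IsOpen (U i)) ∧ (∀ i, F i ⊆ U i) ∧
      (s : Set ι).PairwiseDisjoint U := by
  have hsep : ∀ i k, ∃ V W : Set X, IsOpen V ∧ IsOpen W ∧ F i ⊆ V ∧ F k ⊆ W ∧
      (i ≠ k → Disjoint V W) := by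
    intro i k
    by_cases hik : i = k
    · exact ⟨univ, univ, isOpen_univ, isOpen_univ, subset_univ _, subset_univ _,
        fun h => (h hik).elim⟩
    · obtain ⟨V, W, hV, hW, hFV, hFW, hVW⟩ := normal_separation (hF i) (hF k) (hdisj hik)
      exact ⟨V, W, hV, hW, hFV, hFW, fun _ => hVW⟩
  choose V W hV hW hFV hFW hVW using hsep
  -- `U i` stays on the `F i` side of its separation from each `F k`, `k ∈ s`
  refine ⟨fun i => ⋂ k ∈ s, V i k ∩ W k i,
    fun i => isOpen_biInter_finset fun k _ => (hV i k).inter (hW k i),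
    fun i => subset_iInter₂ fun k _ => subset_inter (hFV i k) (hFW k i), ?_⟩
  intro i hi k hk hik
  exact (hVW i k hik).mono (biInter_subset_of_mem (t := fun k => V i k ∩ W k i) hk |>.trans
    inter_subset_left) (biInter_subset_of_mem (t := fun i' => V k i' ∩ W i' k) hi |>.trans
    inter_subset_right)

section Regular

variable {X : Type*} [TopologicalSpace X] [MeasurableSpace X] [OpensMeasurableSpace X]
  (μ : Measure X) [μ.WeaklyRegular]

theorem MeasurableSet.exists_isClosed_subset_isOpen_superset_measure_lt {A : Set X}
    (hA : MeasurableSet A) (hμA : μ A ≠ ⊤) {η : ENNReal} (hη : η ≠ 0) :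
    ∃ F O : Set X, IsClosed F ∧ IsOpen O ∧ F ⊆ A ∧ F ⊆ O ∧ μ ((A ∪ O) \ F) < η := by
  obtain ⟨F, hFA, hF, hAF⟩ := hA.exists_isClosed_sdiff_lt hμA (ENNReal.half_pos hη).ne'
  obtain ⟨O, hFO, hO, -, hOF⟩ := hF.measurableSet.exists_isOpen_sdiff_lt
    (ne_top_of_le_ne_top hμA (measure_mono hFA)) (ENNReal.half_pos hη).ne'
  refine ⟨F, O, hF, hO, hFA, hFO, ?_⟩
  calc μ ((A ∪ O) \ F) = μ (A \ F ∪ O \ F) := by rw [union_sdiff_distrib]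
    _ ≤ μ (A \ F) + μ (O \ F) := measure_union_le _ _
    _ < η / 2 + η / 2 := ENNReal.add_lt_add hAF hOF
    _ = η := ENNReal.add_halves η

theorem exists_continuous_sum_le_one_approx_indicator [NormalSpace X] [IsFiniteMeasure μ]
    {ι : Type*} (s : Finset ι) {A : ι → Set X} (hA : ∀ i, MeasurableSet (A i))
    (hdisj : Pairwise (Disjoint on A)) {δ : ENNReal} (hδ : δ ≠ 0) :
    ∃ ψ : ι → X → ℝ, (∀ i, Continuous (ψ i)) ∧ (∀ i x, ψ i x ∈ Icc 0 1) ∧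
      (∀ x, ∑ i ∈ s, ψ i x ≤ 1) ∧
      ∑ i ∈ s, μ {x | ψ i x ≠ (A i).indicator 1 x} ≤ δ := by
  have hη : δ / s.card ≠ 0 := ENNReal.div_ne_zero.2 ⟨hδ, ENNReal.natCast_ne_top _⟩
  choose F O hF hO hFA hFO hμ using fun i =>
    (hA i).exists_isClosed_subset_isOpen_superset_measure_lt μ (measure_ne_top μ _) hη
  obtain ⟨U, hU, hFU, hUdisj⟩ := exists_isOpen_superset_pairwise_disjoint s hF
    fun i k hik => (hdisj hik).mono (hFA i) (hFA k)
  choose ψ hψ0 hψ1 hψ01 using fun i => exists_continuous_zero_one_of_isClosed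
    ((hO i).inter (hU i)).isClosed_compl (hF i)
    (disjoint_compl_left_iff_subset.2 (subset_inter (hFO i) (hFU i)))
  refine ⟨fun i => ψ i, fun i => (ψ i).continuous, hψ01, fun x => ?_, ?_⟩
  · by_cases hx : ∃ i ∈ s, x ∈ U i
    · obtain ⟨i, hi, hxi⟩ := hx
      rw [Finset.sum_eq_single_of_mem i hi fun k hk hki =>
        hψ0 k fun hxk => (hUdisj hk hi hki).ne_of_mem hxk.2 hxi rfl]
      exact (hψ01 i x).2
    · push Not at hx
      exact (Finset.sum_eq_zero fun i hi => hψ0 i fun hxi => hx i hi hxi.2).trans_le zero_le_one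
  · have hbad : ∀ i, {x | ψ i x ≠ (A i).indicator 1 x} ⊆ (A i ∪ O i) \ F i := by
      intro i x hx
      refine ⟨?_, fun hxF => hx ?_⟩
      · by_contra hxAO
        rw [mem_union, not_or] at hxAO
        exact hx (by rw [hψ0 i fun hxO => hxAO.2 hxO.1, indicator_of_notMem hxAO.1, Pi.zero_apply])
      · rw [hψ1 i hxF, indicator_of_mem (hFA i hxF)]
    calc ∑ i ∈ s, μ {x | ψ i x ≠ (A i).indicator 1 x}
        ≤ ∑ i ∈ s, δ / s.card :=
          Finset.sum_le_sum fun i _ => (measure_mono (hbad i)).trans (hμ i).le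
      _ = s.card * (δ / s.card) := by rw [Finset.sum_const, nsmul_eq_mul]
      _ ≤ δ := ENNReal.mul_div_le

end Regular

theorem exists_continuous_integral_norm_le_sum_norm_integral_smul_add {X E : Type*}
    [TopologicalSpace X] [NormalSpace X] [MeasurableSpace X] [OpensMeasurableSpace X]
    [NormedAddCommGroup E] [NormedSpace ℝ E] [CompleteSpace E]
    (μ : Measure X) [IsFiniteMeasure μ] [μ.WeaklyRegular] {P : X → E}
    (hPm : AEStronglyMeasurable P μ) (hP : ∀ᵐ x ∂μ, ‖P x‖ ≤ 1) {δ : ℝ} (hδ : 0 < δ) :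
    ∃ (s : Finset E) (ψ : E → X → ℝ), (∀ c, Continuous (ψ c)) ∧ (∀ c x, ψ c x ∈ Icc 0 1) ∧
      (∀ x, ∑ c ∈ s, ψ c x ≤ 1) ∧
      ∫ x, ‖P x‖ ∂μ ≤ ∑ c ∈ s, ‖∫ x, ψ c x • P x ∂μ‖ + δ := by
  obtain ⟨s, A, hA, hdisj, hPA⟩ := exists_integral_norm_le_sum_norm_setIntegral
    ((integrable_const 1).mono' hPm hP) (half_pos hδ)
  obtain ⟨ψ, hψc, hψ01, hψsum, hψA⟩ := exists_continuous_sum_le_one_approx_indicator μ s hA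
    hdisj (ENNReal.ofReal_pos.2 (half_pos hδ)).ne'
  refine ⟨s, ψ, hψc, hψ01, hψsum, ?_⟩
  have hbad : ∑ c ∈ s, μ.real {x | ψ c x ≠ (A c).indicator 1 x} ≤ δ / 2 := by
    simp only [measureReal_def]
    rw [← ENNReal.toReal_sum fun _ _ => measure_ne_top _ _]
    exact ENNReal.toReal_le_of_le_ofReal (half_pos hδ).le hψA
  have happrox : ∀ c, ‖∫ x in A c, P x ∂μ‖
      ≤ ‖∫ x, ψ c x • P x ∂μ‖ + μ.real {x | ψ c x ≠ (A c).indicator 1 x} := fun c =>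
    (norm_le_norm_add_norm_sub' _ _).trans <| add_le_add_right (by
      rw [norm_sub_rev]
      exact norm_integral_smul_sub_setIntegral_le hPm hP (hψc c).measurable (hψ01 c) (hA c)) _
  calc ∫ x, ‖P x‖ ∂μ ≤ ∑ c ∈ s, ‖∫ x in A c, P x ∂μ‖ + δ / 2 := hPA
    _ ≤ ∑ c ∈ s, (‖∫ x, ψ c x • P x ∂μ‖ + μ.real {x | ψ c x ≠ (A c).indicator 1 x}) + δ / 2 := by
        gcongr with c; exact happrox c
    _ ≤ ∑ c ∈ s, ‖∫ x, ψ c x • P x ∂μ‖ + δ := by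
        rw [Finset.sum_add_distrib]; linarith

theorem ofReal_sum_norm_integral_smul_le_measure_univ {Y E ι : Type*} [MeasurableSpace Y]
    [NormedAddCommGroup E] [NormedSpace ℝ E] (σ : Measure Y) {f : Y → E}
    (hf : ∀ᵐ y ∂σ, ‖f y‖ ≤ 1) (s : Finset ι) {ψ : ι → Y → ℝ} (hψm : ∀ i, Measurable (ψ i))
    (hψ0 : ∀ i y, 0 ≤ ψ i y) (hψ1 : ∀ y, ∑ i ∈ s, ψ i y ≤ 1) :
    ENNReal.ofReal (∑ i ∈ s, ‖∫ y, ψ i y • f y ∂σ‖) ≤ σ univ := by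
  have hpt : ∀ i, ∀ᵐ y ∂σ, ‖ψ i y • f y‖ₑ ≤ ENNReal.ofReal (ψ i y) := fun i => by
    filter_upwards [hf] with y hy
    rw [enorm_smul, Real.enorm_of_nonneg (hψ0 i y)]
    exact mul_le_of_le_one_right' (by rw [← ofReal_norm]; exact ENNReal.ofReal_le_one.2 hy)
  calc ENNReal.ofReal (∑ i ∈ s, ‖∫ y, ψ i y • f y ∂σ‖)
      = ∑ i ∈ s, ‖∫ y, ψ i y • f y ∂σ‖ₑ := by
        rw [ENNReal.ofReal_sum_of_nonneg fun _ _ => norm_nonneg _]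
        simp only [ofReal_norm]
    _ ≤ ∑ i ∈ s, ∫⁻ y, ENNReal.ofReal (ψ i y) ∂σ := Finset.sum_le_sum fun i _ =>
        (enorm_integral_le_lintegral_enorm _).trans (lintegral_mono_ae (hpt i))
    _ = ∫⁻ y, ENNReal.ofReal (∑ i ∈ s, ψ i y) ∂σ := by
        rw [← lintegral_finsetSum _ fun i _ => (hψm i).ennreal_ofReal]
        simp only [ENNReal.ofReal_sum_of_nonneg fun i _ => hψ0 i _]
    _ ≤ ∫⁻ _, 1 ∂σ := lintegral_mono fun y => ENNReal.ofReal_le_one.2 (hψ1 y)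
    _ = σ univ := lintegral_one

theorem ofReal_integral_norm_le_liminf_measure_univ {X Y E β : Type*}
    [TopologicalSpace X] [NormalSpace X] [MeasurableSpace X] [OpensMeasurableSpace X]
    [MeasurableSpace Y] [NormedAddCommGroup E] [NormedSpace ℝ E] [CompleteSpace E]
    (Λ : Measure X) [IsFiniteMeasure Λ] [Λ.WeaklyRegular] {P : X → E}
    (hPm : AEStronglyMeasurable P Λ) (hP : ∀ᵐ x ∂Λ, ‖P x‖ ≤ 1)
    {l : Filter β} [l.NeBot] (σ : β → Measure Y) {m : β → Y → X} (hm : ∀ j, Measurable (m j))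
    {f : β → Y → E} (hf : ∀ j, ∀ᵐ y ∂σ j, ‖f j y‖ ≤ 1)
    (hconv : ∀ ψ : X → ℝ, Continuous ψ → (∀ x, ψ x ∈ Icc 0 1) →
      Tendsto (fun j => ∫ y, ψ (m j y) • f j y ∂σ j) l (𝓝 (∫ x, ψ x • P x ∂Λ))) :
    ENNReal.ofReal (∫ x, ‖P x‖ ∂Λ) ≤ liminf (fun j => σ j univ) l := by
  refine ENNReal.le_of_forall_pos_le_add fun δ hδ _ => ?_
  obtain ⟨s, ψ, hψc, hψ01, hψsum, hle⟩ :=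
    exists_continuous_integral_norm_le_sum_norm_integral_smul_add Λ hPm hP hδ
  have hlim : Tendsto (fun j => ENNReal.ofReal (∑ c ∈ s, ‖∫ y, ψ c (m j y) • f j y ∂σ j‖)) l
      (𝓝 (ENNReal.ofReal (∑ c ∈ s, ‖∫ x, ψ c x • P x ∂Λ‖))) :=
    (ENNReal.continuous_ofReal.tendsto _).comp
      (tendsto_finsetSum s fun c _ => (hconv (ψ c) (hψc c) (hψ01 c)).norm)
  have hbound : ∀ j, ENNReal.ofReal (∑ c ∈ s, ‖∫ y, ψ c (m j y) • f j y ∂σ j‖) ≤ σ j univ :=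
    fun j => ofReal_sum_norm_integral_smul_le_measure_univ (σ j) (hf j) s
      (fun c => (hψc c).measurable.comp (hm j)) (fun c y => (hψ01 c _).1)
      fun y => hψsum (m j y)
  calc ENNReal.ofReal (∫ x, ‖P x‖ ∂Λ)
      ≤ ENNReal.ofReal (∑ c ∈ s, ‖∫ x, ψ c x • P x ∂Λ‖) + δ := by
        rw [← ENNReal.ofReal_coe_nnreal, ← ENNReal.ofReal_add (by positivity) δ.coe_nonneg]
        exact ENNReal.ofReal_le_ofReal hle
    _ ≤ liminf (fun j => σ j univ) l + δ := by
        rw [← hlim.liminf_eq]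
        gcongr
        exact liminf_le_liminf (Eventually.of_forall hbound)

theorem stmt15_general {d : ℕ} {E : Type*} [NormedAddCommGroup E] [NormedSpace ℝ E]
    [CompleteSpace E]
    (ε : ℕ → ℝ)
    (σ : ℕ → Measure (Fin d → ℝ))
    (f : ℕ → (Fin d → ℝ) → E)
    (hfp : ∀ j, ∀ᵐ x ∂σ j, ‖f j x‖ = 1)
    (Λ : Measure ((Fin d → ℝ) × (Fin d → AddCircle (1 : ℝ)))) [IsFiniteMeasure Λ]
    (P : (Fin d → ℝ) × (Fin d → AddCircle (1 : ℝ)) → E)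
    (hPm : AEStronglyMeasurable P Λ) (hP : ∀ᵐ p ∂Λ, ‖P p‖ = 1)
    (htwo : ∀ Ψ : (Fin d → ℝ) × (Fin d → AddCircle (1 : ℝ)) → ℝ, Continuous Ψ →
      (∃ C, ∀ p, |Ψ p| ≤ C) →
      Tendsto
        (fun j => ∫ x, Ψ (x, fun i => (((ε j)⁻¹ * x i : ℝ) : AddCircle (1 : ℝ))) • f j x ∂σ j)
        atTop (𝓝 (∫ p, Ψ p • P p ∂Λ))) :
    Λ Set.univ ≤ liminf (fun j => σ j Set.univ) atTop := by
  have hΛ : Λ univ = ENNReal.ofReal (∫ p, ‖P p‖ ∂Λ) := by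
    rw [integral_congr_ae hP, integral_const, smul_eq_mul, mul_one, ofReal_measureReal]
  have htwo_scale_map : ∀ j, Continuous fun x : Fin d → ℝ =>
      (x, fun i => (((ε j)⁻¹ * x i : ℝ) : AddCircle (1 : ℝ))) := fun j =>
    continuous_id.prodMk <| continuous_pi fun i =>
      (AddCircle.continuous_mk' 1).comp (continuous_const.mul (continuous_apply i))
  rw [hΛ]
  exact ofReal_integral_norm_le_liminf_measure_univ Λ hPm (hP.mono fun p hp => hp.le) σ
    (fun j => (htwo_scale_map j).measurable) (fun j => (hfp j).mono fun x hx => hx.le)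
    fun ψ hψ hψ01 => htwo ψ hψ ⟨1, fun p => abs_le.2 ⟨by linarith [(hψ01 p).1], (hψ01 p).2⟩⟩

/-- Lower semicontinuity of the total variation under two-scale convergence: if a
uniformly bounded sequence of `E`-valued measures `μ_ε = f_ε σ_ε` supported in `Ω`
two-scale converges to the `E`-valued measure `κ ⊗ θ_x` on `Ω̄ × Z` (represented here by
its total variation `Λ` and polar `P`), then
`(κ ⊗ |θ_x|)(Ω̄ × Z) = Λ(Ω̄ × Z) ≤ liminf |μ_ε|(Ω)`. -/
theorem stmt15 {d : ℕ} {E : Type*} [NormedAddCommGroup E] [NormedSpace ℝ E]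
    [CompleteSpace E]
    (Ω : Set (Fin d → ℝ)) (hΩo : IsOpen Ω) (hΩb : Bornology.IsBounded Ω)
    (ε : ℕ → ℝ) (hε : ∀ j, 0 < ε j) (hε0 : Tendsto ε atTop (𝓝 0))
    (σ : ℕ → Measure (Fin d → ℝ)) (hfin : ∀ j, IsFiniteMeasure (σ j))
    (hsupp : ∀ j, σ j Ωᶜ = 0)
    (f : ℕ → (Fin d → ℝ) → E) (hfm : ∀ j, AEStronglyMeasurable (f j) (σ j))
    (hfp : ∀ j, ∀ᵐ x ∂σ j, ‖f j x‖ = 1)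
    (hbd : ∃ C : NNReal, ∀ j, σ j Set.univ ≤ C)
    (Λ : Measure ((Fin d → ℝ) × (Fin d → AddCircle (1 : ℝ)))) [IsFiniteMeasure Λ]
    (P : (Fin d → ℝ) × (Fin d → AddCircle (1 : ℝ)) → E)
    (hPm : AEStronglyMeasurable P Λ) (hP : ∀ᵐ p ∂Λ, ‖P p‖ = 1)
    (htwo : ∀ Ψ : (Fin d → ℝ) × (Fin d → AddCircle (1 : ℝ)) → ℝ, Continuous Ψ →
      (∃ C, ∀ p, |Ψ p| ≤ C) →
      Tendsto
        (fun j => ∫ x, Ψ (x, fun i => (((ε j)⁻¹ * x i : ℝ) : AddCircle (1 : ℝ))) • f j x ∂σ j)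
        atTop (𝓝 (∫ p, Ψ p • P p ∂Λ))) :
    Λ Set.univ ≤ liminf (fun j => σ j Set.univ) atTop :=
  stmt15_general ε σ f hfp Λ P hPm hP htwo
end

section
/- Let ν be a probability measure on E with finite first moment and let h : E → ℝ be convex with linear growth at infinity, with recession function h^∞. Let ν^∞ be a probability measure on the unit sphere of E, and λ ≥ 0. Then h(⟨id, ν⟩ + λ⟨id, ν^∞⟩) ≤ ⟨h, ν⟩ + λ⟨h^∞, ν^∞⟩, where ⟨g, μ⟩ := ∫ g dμ. -/
/-!
The recession function `h^∞` of a convex `h` is convex and positively homogeneous, and it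
dominates increments of `h`: `h (a + z) ≤ h a + h^∞ z`, since the slopes `(h (a + t z) - h a) / t`
of a convex function increase in `t`. Hence, writing `b, b^∞` for the two barycenters,
`h (b + λ b^∞) ≤ h b + λ h^∞ b^∞`, and Jensen's inequality for `h` and for `h^∞` finishes.
-/

open MeasureTheory Filter Topology Set

def IsRecessionFunction {E : Type*} [AddCommGroup E] [Module ℝ E]
    (h hinf : E → ℝ) : Prop :=
  ∀ z, Tendsto (fun t : ℝ => h (t • z) / t) atTop (𝓝 (hinf z))

namespace IsRecessionFunction

section Module

variable {E : Type*} [AddCommGroup E] [Module ℝ E] {h hinf : E → ℝ}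

theorem map_zero (hrec : IsRecessionFunction h hinf) : hinf 0 = 0 := by
  refine tendsto_nhds_unique (hrec 0) ?_
  simp only [smul_zero]
  exact tendsto_const_nhds.div_atTop tendsto_id

theorem map_smul (hrec : IsRecessionFunction h hinf) {c : ℝ} (hc : 0 ≤ c) (z : E) :
    hinf (c • z) = c * hinf z := by
  rcases hc.eq_or_lt with rfl | hc
  · simp [hrec.map_zero]
  refine tendsto_nhds_unique (hrec (c • z)) ?_
  have hlim := ((hrec z).comp (tendsto_id.const_mul_atTop hc)).const_mul c
  refine hlim.congr' ?_
  filter_upwards [eventually_gt_atTop 0] with t ht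
  simp only [Function.comp_apply, id, smul_smul, mul_comm t c]
  field_simp

theorem convexOn (hrec : IsRecessionFunction h hinf) (hconv : ConvexOn ℝ univ h) :
    ConvexOn ℝ univ hinf := by
  refine ⟨convex_univ, fun x _ y _ a b ha hb hab => ?_⟩
  refine le_of_tendsto_of_tendsto (hrec _) (((hrec x).const_mul a).add ((hrec y).const_mul b)) ?_
  filter_upwards [eventually_gt_atTop 0] with t ht
  have hjensen := hconv.2 (mem_univ (t • x)) (mem_univ (t • y)) ha hb hab
  rw [smul_comm a t x, smul_comm b t y, ← smul_add, smul_eq_mul, smul_eq_mul] at hjensen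
  calc h (t • (a • x + b • y)) / t ≤ (a * h (t • x) + b * h (t • y)) / t := by gcongr
    _ = a * (h (t • x) / t) + b * (h (t • y) / t) := by ring

theorem apply_add_le (hrec : IsRecessionFunction h hinf) (hconv : ConvexOn ℝ univ h) (a z : E) :
    h (a + z) ≤ h a + hinf z := by
  have hsecant : ∀ t : ℝ, 1 ≤ t → h (a + z) ≤ (1 - t⁻¹) * h a + t⁻¹ * h (a + t • z) := by
    intro t ht
    have ht0 : 0 < t := zero_lt_one.trans_le ht
    have := hconv.2 (mem_univ a) (mem_univ (a + t • z)) (sub_nonneg.2 (inv_le_one_of_one_le₀ ht))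
      (inv_nonneg.2 ht0.le) (sub_add_cancel 1 t⁻¹)
    rwa [smul_add, smul_smul, inv_mul_cancel₀ ht0.ne', one_smul, ← add_assoc, ← add_smul,
      sub_add_cancel, one_smul, smul_eq_mul, smul_eq_mul] at this
  -- `h (a + t • z)` is compared with `h (2 • a)` and `h ((2 * t) • z)`, whose growth in `t` is known.
  have hmidpoint : ∀ t : ℝ, h (a + t • z) ≤ h ((2 : ℝ) • a) / 2 + h ((2 * t) • z) / 2 := by
    intro t
    have := hconv.2 (mem_univ ((2 : ℝ) • a)) (mem_univ ((2 * t) • z)) (by norm_num : (0 : ℝ) ≤ 2⁻¹)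
      (by norm_num : (0 : ℝ) ≤ 2⁻¹) (by norm_num)
    rw [smul_smul, smul_smul, inv_mul_cancel₀ two_ne_zero, one_smul, ← mul_assoc,
      inv_mul_cancel₀ two_ne_zero, one_mul, smul_eq_mul, smul_eq_mul] at this
    linarith
  have hlim : Tendsto (fun t : ℝ => (1 - t⁻¹) * h a + t⁻¹ * (h ((2 : ℝ) • a) / 2)
      + h ((2 * t) • z) / (2 * t)) atTop (𝓝 (h a + hinf z)) := by
    have hinv := tendsto_inv_atTop_zero (𝕜 := ℝ)
    have := ((((tendsto_const_nhds (x := (1 : ℝ))).sub hinv).mul_const (h a)).add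
      (hinv.mul_const (h ((2 : ℝ) • a) / 2))).add
      ((hrec z).comp (tendsto_id.const_mul_atTop two_pos))
    simpa using this
  refine ge_of_tendsto hlim ?_
  filter_upwards [eventually_ge_atTop 1] with t ht
  have ht0 : 0 < t := zero_lt_one.trans_le ht
  calc h (a + z) ≤ (1 - t⁻¹) * h a + t⁻¹ * h (a + t • z) := hsecant t ht
    _ ≤ (1 - t⁻¹) * h a + t⁻¹ * (h ((2 : ℝ) • a) / 2 + h ((2 * t) • z) / 2) := by
      gcongr; exact hmidpoint t
    _ = _ := by field_simp; ring

end Module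

theorem abs_le_mul_norm {E : Type*} [NormedAddCommGroup E] [NormedSpace ℝ E] {h hinf : E → ℝ}
    {M : ℝ} (hrec : IsRecessionFunction h hinf)
    (hgrowth : ∀ z, |h z| ≤ M * (1 + ‖z‖)) (z : E) : |hinf z| ≤ M * ‖z‖ := by
  have hbound : Tendsto (fun t : ℝ => M / t + M * ‖z‖) atTop (𝓝 (M * ‖z‖)) := by
    simpa using (tendsto_const_nhds.div_atTop tendsto_id).add_const (M * ‖z‖)
  refine le_of_tendsto_of_tendsto (hrec z).abs hbound ?_
  filter_upwards [eventually_gt_atTop 0] with t ht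
  have := hgrowth (t • z)
  rw [norm_smul, Real.norm_eq_abs, abs_of_pos ht] at this
  rw [abs_div, abs_of_pos ht, div_le_iff₀ ht]
  calc |h (t • z)| ≤ M * (1 + t * ‖z‖) := this
    _ = (M / t + M * ‖z‖) * t := by field_simp

end IsRecessionFunction

theorem stmt16_general {E : Type*} [NormedAddCommGroup E] [NormedSpace ℝ E]
    [FiniteDimensional ℝ E] [MeasurableSpace E] [BorelSpace E]
    (ν νinf : Measure E) [IsProbabilityMeasure ν] [IsProbabilityMeasure νinf]
    (hmom : Integrable (fun z : E => z) ν)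
    (hsph : ∀ᵐ z ∂νinf, ‖z‖ = 1)
    (h : E → ℝ) (hconv : ConvexOn ℝ Set.univ h)
    (M : ℝ) (hgrowth : ∀ z, |h z| ≤ M * (1 + ‖z‖))
    (hinf : E → ℝ)
    (hrec : ∀ z, Tendsto (fun t : ℝ => h (t • z) / t) atTop (𝓝 (hinf z)))
    (lam : ℝ) (hlam : 0 ≤ lam) :
    h ((∫ z, z ∂ν) + lam • ∫ z, z ∂νinf) ≤ (∫ z, h z ∂ν) + lam * ∫ z, hinf z ∂νinf := by
  have hrec : IsRecessionFunction h hinf := hrec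
  have hinfconv := hrec.convexOn hconv
  have hcont : Continuous h := continuousOn_univ.mp (hconv.continuousOn isOpen_univ)
  have hinfcont : Continuous hinf := continuousOn_univ.mp (hinfconv.continuousOn isOpen_univ)
  have hint : Integrable h ν :=
    ((integrable_const M).add (hmom.norm.const_mul M)).mono' hcont.aestronglyMeasurable
      (.of_forall fun z => by simpa [mul_add] using hgrowth z)
  have hidint : Integrable (fun z : E => z) νinf :=
    (integrable_const (1 : ℝ)).mono' aestronglyMeasurable_id (by filter_upwards [hsph]; simp_all)
  have hinfint : Integrable hinf νinf :=
    (integrable_const M).mono' hinfcont.aestronglyMeasurable <| by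
      filter_upwards [hsph] with z hz
      simpa [hz] using hrec.abs_le_mul_norm hgrowth z
  have hjensen := hconv.map_integral_le hcont.continuousOn isClosed_univ (.of_forall fun _ => trivial)
    hmom hint
  have hjensen_inf := hinfconv.map_integral_le hinfcont.continuousOn isClosed_univ
    (.of_forall fun _ => trivial) hidint hinfint
  calc h ((∫ z, z ∂ν) + lam • ∫ z, z ∂νinf)
      ≤ h (∫ z, z ∂ν) + lam * hinf (∫ z, z ∂νinf) := by
        rw [← hrec.map_smul hlam]; exact hrec.apply_add_le hconv _ _
    _ ≤ (∫ z, h z ∂ν) + lam * ∫ z, hinf z ∂νinf :=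
        add_le_add hjensen (mul_le_mul_of_nonneg_left hjensen_inf hlam)

/-- Combined Jensen inequality for generalized Young measures: for a probability
measure `ν` on `E` with finite first moment, a probability measure `ν^∞` on the unit
sphere, `λ ≥ 0`, and a convex `h` with linear growth and recession function `h^∞`, one
has `h(⟨id,ν⟩ + λ⟨id,ν^∞⟩) ≤ ⟨h,ν⟩ + λ⟨h^∞,ν^∞⟩`. -/
theorem stmt16 {E : Type*} [NormedAddCommGroup E] [NormedSpace ℝ E]
    [FiniteDimensional ℝ E] [MeasurableSpace E] [BorelSpace E]
    (ν νinf : Measure E) [IsProbabilityMeasure ν] [IsProbabilityMeasure νinf]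
    (hmom : Integrable (fun z : E => z) ν)
    (hsph : ∀ᵐ z ∂νinf, ‖z‖ = 1)
    (h : E → ℝ) (hconv : ConvexOn ℝ Set.univ h)
    (M : ℝ) (hM : 0 < M) (hgrowth : ∀ z, |h z| ≤ M * (1 + ‖z‖))
    (hinf : E → ℝ)
    (hrec : ∀ z, Tendsto (fun t : ℝ => h (t • z) / t) atTop (𝓝 (hinf z)))
    (lam : ℝ) (hlam : 0 ≤ lam) :
    h ((∫ z, z ∂ν) + lam • ∫ z, z ∂νinf) ≤ (∫ z, h z ∂ν) + lam * ∫ z, hinf z ∂νinf :=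
  stmt16_general ν νinf hmom hsph h hconv M hgrowth hinf hrec lam hlam
end
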